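/- In the Artin group A(4,4,2) = ⟨s, t, r | stst = tsts, trtr = rtrt, sr = rs⟩, for every k ≥ 1 and all nonzero integers n_1, m_1, …, n_k, m_k, the element strt commutes with the element (r^{n_1} t^{-1} s^{m_1} t)(r^{n_2} t^{-1} s^{m_2} t) ⋯ (r^{n_k} t^{-1} s^{m_k} t). In particular, for each such product w, the subgroup ⟨strt, w⟩ of A(4,4,2) is abelian. -/

import Mathlib

/-!
`strt` commutes with `r` (by `trtr = rtrt` and `sr = rs`) and with `t⁻¹st` (by `stst = tsts`
and `sr = rs`), hence with every factor `rⁿ t⁻¹sᵐt = rⁿ (t⁻¹st)ᵐ` and so with their product.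
-/

namespace A442

/-- The defining relations of the Artin group
`A(4,4,2) = ⟨s, t, r | stst = tsts, trtr = rtrt, sr = rs⟩`,
with `0, 1, 2` playing the roles of `s, t, r`. -/
def rels : Set (FreeGroup (Fin 3)) :=
  { FreeGroup.of 0 * FreeGroup.of 1 * FreeGroup.of 0 * FreeGroup.of 1 *
      (FreeGroup.of 1 * FreeGroup.of 0 * FreeGroup.of 1 * FreeGroup.of 0)⁻¹,
    FreeGroup.of 1 * FreeGroup.of 2 * FreeGroup.of 1 * FreeGroup.of 2 *
      (FreeGroup.of 2 * FreeGroup.of 1 * FreeGroup.of 2 * FreeGroup.of 1)⁻¹,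
    FreeGroup.of 0 * FreeGroup.of 2 * (FreeGroup.of 2 * FreeGroup.of 0)⁻¹ }

/-- The Artin group `A(4,4,2)`. -/
abbrev Grp := PresentedGroup rels

def s : Grp := PresentedGroup.of 0
def t : Grp := PresentedGroup.of 1
def r : Grp := PresentedGroup.of 2

end A442

section ArtinRelations

variable {G : Type*} [Group G]

theorem Subgroup.isMulCommutative_closure_pair {a b : G} (h : Commute a b) :
    IsMulCommutative (Subgroup.closure {a, b}) := by
  refine Subgroup.isMulCommutative_closure ?_
  simp only [Set.mem_insert_iff, Set.mem_singleton_iff]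
  rintro x (rfl | rfl) y (rfl | rfl)
  exacts [rfl, h, h.symm, rfl]

variable {s t r : G}

theorem commute_strt_r (htr : t * r * t * r = r * t * r * t) (hsr : Commute s r) :
    Commute (s * t * r * t) r :=
  calc s * t * r * t * r = s * (t * r * t * r) := by group
    _ = s * r * (t * r * t) := by rw [htr]; group
    _ = r * (s * t * r * t) := by rw [hsr.eq]; group

theorem commute_strt_conj_s (hst : s * t * s * t = t * s * t * s) (hsr : Commute s r) :
    Commute (s * t * r * t) (t⁻¹ * s * t) :=
  calc s * t * r * t * (t⁻¹ * s * t) = s * t * (r * s) * t := by group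
    _ = t⁻¹ * (t * s * t * s) * r * t := by rw [← hsr.eq]; group
    _ = t⁻¹ * s * t * (s * t * r * t) := by rw [← hst]; group

theorem commute_strt_zpow_mul_conj_zpow (hst : s * t * s * t = t * s * t * s)
    (htr : t * r * t * r = r * t * r * t) (hsr : Commute s r) (n m : ℤ) :
    Commute (s * t * r * t) (r ^ n * t⁻¹ * s ^ m * t) := by
  have hconj : (t⁻¹ * s * t) ^ m = t⁻¹ * s ^ m * t := by
    simpa only [inv_inv] using conj_zpow (a := t⁻¹) (b := s) (i := m)
  rw [show r ^ n * t⁻¹ * s ^ m * t = r ^ n * (t⁻¹ * s * t) ^ m by rw [hconj]; group]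
  exact ((commute_strt_r htr hsr).zpow_right n).mul_right
    ((commute_strt_conj_s hst hsr).zpow_right m)

end ArtinRelations

namespace A442

theorem stst_eq_tsts : s * t * s * t = t * s * t * s :=
  PresentedGroup.mk_eq_mk_of_mul_inv_mem (Set.mem_insert _ _)

theorem trtr_eq_rtrt : t * r * t * r = r * t * r * t :=
  PresentedGroup.mk_eq_mk_of_mul_inv_mem (Set.mem_insert_of_mem _ (Set.mem_insert _ _))

theorem commute_s_r : Commute s r :=
  PresentedGroup.mk_eq_mk_of_mul_inv_mem (Set.mem_insert_of_mem _ (Set.mem_insert_of_mem _ rfl))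

end A442

open A442 in
theorem A442_strt_commutes_general (k : ℕ) (n m : Fin k → ℤ) :
    Commute (s * t * r * t)
      (((List.finRange k).map fun p => r ^ n p * t⁻¹ * s ^ m p * t).prod) ∧
    IsMulCommutative (Subgroup.closure {s * t * r * t,
      ((List.finRange k).map fun p => r ^ n p * t⁻¹ * s ^ m p * t).prod}) := by
  have hcomm : Commute (s * t * r * t)
      (((List.finRange k).map fun p => r ^ n p * t⁻¹ * s ^ m p * t).prod) := by
    refine Commute.list_prod_right _ _ fun x hx => ?_
    obtain ⟨p, -, rfl⟩ := List.mem_map.mp hx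
    exact commute_strt_zpow_mul_conj_zpow stst_eq_tsts trtr_eq_rtrt commute_s_r (n p) (m p)
  exact ⟨hcomm, Subgroup.isMulCommutative_closure_pair hcomm⟩

open A442 in
/-- In `A(4,4,2)`, the element `strt` commutes with every product
`(r^{n₁}t⁻¹s^{m₁}t)⋯(r^{n_k}t⁻¹s^{m_k}t)` with all `nᵢ, mᵢ` nonzero; in particular
the subgroup generated by `strt` and such a product is abelian. -/
theorem A442_strt_commutes (k : ℕ) (hk : 1 ≤ k) (n m : Fin k → ℤ)
    (hn : ∀ p, n p ≠ 0) (hm : ∀ p, m p ≠ 0) :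
    Commute (s * t * r * t)
      (((List.finRange k).map fun p => r ^ n p * t⁻¹ * s ^ m p * t).prod) ∧
    IsMulCommutative (Subgroup.closure {s * t * r * t,
      ((List.finRange k).map fun p => r ^ n p * t⁻¹ * s ^ m p * t).prod}) :=
  A442_strt_commutes_general k n m
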